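/- arXiv:1511.04106 — 4 statements merged into one kernel-verified Lean document; each statement's English description precedes it below -/
import Mathlib

section
/- Let ℓ, t ∈ ℕ and let m_1, …, m_ℓ ∈ ℕ. The partition (1^{m_1}, 2^{m_2}, …, ℓ^{m_ℓ}) is t-universal if and only if ∑_{j=1}^{min(s,ℓ)} j·m_j ≥ s for every s ∈ {1,…,t}. -/
/-- The partition `(1^{m 1}, 2^{m 2}, …, ℓ^{m ℓ})` has a subpartition of size `s`:
there are `c j ≤ m j` with `∑_{j=1}^{ℓ} j * c j = s`. -/
def HasSubpartition (ℓ : ℕ) (m : ℕ → ℕ) (s : ℕ) : Prop :=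
  ∃ c : ℕ → ℕ, (∀ j, c j ≤ m j) ∧ ∑ j ∈ Finset.Icc 1 ℓ, j * c j = s

/-- The partition `(1^{m 1}, 2^{m 2}, …, ℓ^{m ℓ})` is `t`-universal: it has a
subpartition of size `s` for every `s ∈ {1, …, t}`. -/
def IsUniversal (ℓ : ℕ) (m : ℕ → ℕ) (t : ℕ) : Prop :=
  ∀ s, 1 ≤ s → s ≤ t → HasSubpartition ℓ m s

lemma key (ℓ : ℕ) : ∀ s : ℕ, ∀ m : ℕ → ℕ,
    (∀ s', 1 ≤ s' → s' ≤ s → s' ≤ ∑ j ∈ Finset.Icc 1 (min s' ℓ), j * m j) →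
    1 ≤ s → HasSubpartition ℓ m s := by
  intro s
  induction s using Nat.strong_induction_on with
  | _ s ih =>
    intro m hyp hs
    have h1 : s ≤ ∑ j ∈ Finset.Icc 1 (min s ℓ), j * m j := hyp s hs le_rfl
    set T := (Finset.Icc 1 (min s ℓ)).filter (fun j => 1 ≤ m j) with hTdef
    have hTne : T.Nonempty := by
      by_contra h
      rw [Finset.not_nonempty_iff_eq_empty] at h
      have hz : ∑ j ∈ Finset.Icc 1 (min s ℓ), j * m j = 0 := by
        apply Finset.sum_eq_zero
        intro j hj
        have hjT : j ∉ T := by rw [h]; exact Finset.notMem_empty j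
        rw [hTdef, Finset.mem_filter] at hjT
        push_neg at hjT
        have h0 : m j = 0 := by have := hjT hj; omega
        rw [h0, mul_zero]
      omega
    set a := T.max' hTne with hadef
    have haT : a ∈ T := T.max'_mem hTne
    have hamax : ∀ j ∈ T, j ≤ a := fun j hj => T.le_max' j hj
    rw [hTdef, Finset.mem_filter, Finset.mem_Icc] at haT
    obtain ⟨⟨ha1, hamin⟩, hma⟩ := haT
    have haℓ : a ≤ ℓ := le_trans hamin (min_le_right _ _)
    have has : a ≤ s := le_trans hamin (min_le_left _ _)
    -- m j = 0 for j in range above a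
    have hzero : ∀ j, a < j → j ≤ min s ℓ → m j = 0 := by
      intro j haj hjmin
      by_contra hne
      have : j ∈ T := by
        rw [hTdef, Finset.mem_filter, Finset.mem_Icc]
        exact ⟨⟨by omega, hjmin⟩, by omega⟩
      have := hamax j this
      omega
    by_cases hcase : s = a
    · -- take one part of size a
      refine ⟨fun j => if j = a then 1 else 0, ?_, ?_⟩
      · intro j
        by_cases hj : j = a <;> simp [hj]; omega
      · simp only [mul_ite, mul_one, mul_zero]
        rw [Finset.sum_ite_eq' (Finset.Icc 1 ℓ) a (fun j => j)]
        rw [if_pos (by rw [Finset.mem_Icc]; exact ⟨ha1, haℓ⟩)]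
        omega
    · have hlt : a < s := lt_of_le_of_ne has (fun h => hcase h.symm)
      set m' : ℕ → ℕ := fun j => if j = a then m a - 1 else m j with hm'def
      have hyp' : ∀ s', 1 ≤ s' → s' ≤ s - a →
          s' ≤ ∑ j ∈ Finset.Icc 1 (min s' ℓ), j * m' j := by
        intro s' hs'1 hs'sa
        by_cases hs'a : s' < a
        · have : ∑ j ∈ Finset.Icc 1 (min s' ℓ), j * m' j
              = ∑ j ∈ Finset.Icc 1 (min s' ℓ), j * m j := by
            apply Finset.sum_congr rfl
            intro j hj
            rw [Finset.mem_Icc] at hj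
            have : j ≠ a := by
              have := hj.2
              have := min_le_left s' ℓ
              omega
            simp [hm'def, this]
          rw [this]
          exact hyp s' hs'1 (by omega)
        · push_neg at hs'a
          have haℓ' : a ≤ min s' ℓ := le_min hs'a haℓ
          -- sum over Icc 1 (min s' ℓ) of j*m j equals sum over Icc 1 (min s ℓ)
          have hs's : s' ≤ s := by omega
          have hsub : Finset.Icc 1 (min s' ℓ) ⊆ Finset.Icc 1 (min s ℓ) :=
            Finset.Icc_subset_Icc_right (by omega)
          have heq : ∑ j ∈ Finset.Icc 1 (min s' ℓ), j * m j
              = ∑ j ∈ Finset.Icc 1 (min s ℓ), j * m j := by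
            apply Finset.sum_subset hsub
            intro j hj hj'
            rw [Finset.mem_Icc] at hj
            rw [Finset.mem_Icc] at hj'
            have hja : a < j := by omega
            rw [hzero j hja hj.2, mul_zero]
          -- sum of m' = sum of m - a on this range
          have hkey : ∑ j ∈ Finset.Icc 1 (min s' ℓ), j * m' j + a
              = ∑ j ∈ Finset.Icc 1 (min s' ℓ), j * m j := by
            have : ∀ j ∈ Finset.Icc 1 (min s' ℓ),
                j * m' j + (if j = a then a else 0) = j * m j := by
              intro j hj
              by_cases hja : j = a
              · rw [hja]
                simp only [hm'def, if_pos rfl]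
                obtain ⟨k, hk⟩ : ∃ k, m a = k + 1 := ⟨m a - 1, by omega⟩
                rw [hk, Nat.add_sub_cancel, Nat.mul_add, Nat.mul_one]
                simp
              · simp [hm'def, hja]
            calc ∑ j ∈ Finset.Icc 1 (min s' ℓ), j * m' j + a
                = ∑ j ∈ Finset.Icc 1 (min s' ℓ), (j * m' j + if j = a then a else 0) := by
                  rw [Finset.sum_add_distrib, Finset.sum_ite_eq' (Finset.Icc 1 (min s' ℓ)) a (fun _ => a),
                    if_pos (by rw [Finset.mem_Icc]; exact ⟨ha1, haℓ'⟩)]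
              _ = ∑ j ∈ Finset.Icc 1 (min s' ℓ), j * m j := Finset.sum_congr rfl this
          have := hyp s hs le_rfl
          rw [← heq] at this
          omega
      obtain ⟨c', hc', hsum'⟩ := ih (s - a) (by omega) m' hyp' (by omega)
      refine ⟨fun j => if j = a then c' a + 1 else c' j, ?_, ?_⟩
      · intro j
        by_cases hj : j = a
        · simp only [hj, if_pos rfl, if_true, eq_self_iff_true]
          have := hc' a
          simp only [hm'def, if_pos rfl, if_true, eq_self_iff_true] at this
          omega
        · simp only [if_neg hj]
          have := hc' j
          simp only [hm'def, if_neg hj] at this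
          exact this
      · have : ∀ j ∈ Finset.Icc 1 ℓ,
            j * (if j = a then c' a + 1 else c' j) = j * c' j + (if j = a then a else 0) := by
          intro j hj
          by_cases hja : j = a
          · subst hja; simp [mul_add]
          · simp [hja]
        rw [Finset.sum_congr rfl this, Finset.sum_add_distrib,
          Finset.sum_ite_eq' (Finset.Icc 1 ℓ) a (fun _ => a),
          if_pos (by rw [Finset.mem_Icc]; exact ⟨ha1, haℓ⟩), hsum']
        omega

/-- The partition `(1^{m_1}, 2^{m_2}, …, ℓ^{m_ℓ})` is `t`-universal if and only if
`∑_{j=1}^{min(s,ℓ)} j · m_j ≥ s` for every `s ∈ {1, …, t}`. -/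
theorem isUniversal_iff (ℓ t : ℕ) (m : ℕ → ℕ) :
    IsUniversal ℓ m t ↔
      ∀ s, 1 ≤ s → s ≤ t → s ≤ ∑ j ∈ Finset.Icc 1 (min s ℓ), j * m j := by
  constructor
  · intro h s hs1 hst
    obtain ⟨c, hc, hsum⟩ := h s hs1 hst
    have hzero : ∀ j ∈ Finset.Icc 1 ℓ, j ∉ Finset.Icc 1 (min s ℓ) → j * c j = 0 := by
      intro j hj hj'
      rw [Finset.mem_Icc] at hj
      rw [Finset.mem_Icc] at hj'
      have hjs : min s ℓ < j := by omega
      have hjs' : s < j := by omega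
      by_contra hne
      have hcj : 1 ≤ c j := by
        rcases Nat.eq_zero_or_pos (c j) with h0 | h0
        · exact absurd (by rw [h0, mul_zero]) hne
        · exact h0
      have hle : j * c j ≤ s := by
        rw [← hsum]
        exact Finset.single_le_sum (f := fun j => j * c j)
          (fun i _ => Nat.zero_le _) (Finset.mem_Icc.mpr hj)
      have : j ≤ j * c j := Nat.le_mul_of_pos_right j hcj
      omega
    have heq : ∑ j ∈ Finset.Icc 1 (min s ℓ), j * c j
        = ∑ j ∈ Finset.Icc 1 ℓ, j * c j :=
      Finset.sum_subset (Finset.Icc_subset_Icc_right (min_le_right s ℓ)) hzero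
    calc s = ∑ j ∈ Finset.Icc 1 (min s ℓ), j * c j := by rw [heq, hsum]
      _ ≤ ∑ j ∈ Finset.Icc 1 (min s ℓ), j * m j :=
        Finset.sum_le_sum (fun j _ => Nat.mul_le_mul_left j (hc j))
  · intro h s hs1 hst
    exact key ℓ s m (fun s' h1 h2 => h s' h1 (by omega)) hs1
end

section
/- Let ℓ ∈ ℕ, let m_1, …, m_ℓ ∈ ℕ, and let s ≥ 1 be such that ∑_{j=1}^{min(u,ℓ)} j·m_j ≥ u for every u ∈ {1,…,s}. Let q be the largest index with q ≤ min(s,ℓ) and m_q ≥ 1 (such q exists), and define m'_j = m_j for j ≠ q and m'_q = m_q − 1. Then the partition (1^{m'_1}, …, ℓ^{m'_ℓ}) is (s−q)-universal. -/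
/-- The prefix-sum condition transfers to the step-down partition. -/
lemma transfer_hsum (ℓ s : ℕ) (m : ℕ → ℕ)
    (hsum : ∀ u, 1 ≤ u → u ≤ s → u ≤ ∑ j ∈ Finset.Icc 1 (min u ℓ), j * m j)
    (q : ℕ) (hq1 : 1 ≤ q) (hq2 : q ≤ min s ℓ) (hmq : 1 ≤ m q)
    (hqmax : ∀ q', 1 ≤ q' → q' ≤ min s ℓ → 1 ≤ m q' → q' ≤ q) :
    ∀ u, 1 ≤ u → u ≤ s - q →
      u ≤ ∑ j ∈ Finset.Icc 1 (min u ℓ), j * (if j = q then m q - 1 else m j) := by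
  intro u hu1 hu2
  have hqs : q ≤ s := le_trans hq2 (min_le_left _ _)
  have hql : q ≤ ℓ := le_trans hq2 (min_le_right _ _)
  by_cases hlt : u < q
  · have hcong : ∀ j ∈ Finset.Icc 1 (min u ℓ),
        j * (if j = q then m q - 1 else m j) = j * m j := by
      intro j hj
      rw [Finset.mem_Icc] at hj
      have hj2 := hj.2
      have hju : min u ℓ ≤ u := min_le_left _ _
      have : j ≠ q := by omega
      simp [this]
    rw [Finset.sum_congr rfl hcong]
    exact hsum u hu1 (by omega)
  · push_neg at hlt
    have hqmin : q ≤ min u ℓ := le_min hlt hql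
    have hmem : q ∈ Finset.Icc 1 (min u ℓ) := Finset.mem_Icc.mpr ⟨hq1, hqmin⟩
    have hBsum : u + q ≤ ∑ j ∈ Finset.Icc 1 (min (u + q) ℓ), j * m j :=
      hsum (u + q) (by omega) (by omega)
    have hsub : Finset.Icc 1 (min u ℓ) ⊆ Finset.Icc 1 (min (u + q) ℓ) :=
      Finset.Icc_subset_Icc le_rfl (by omega)
    have heq : ∑ j ∈ Finset.Icc 1 (min (u + q) ℓ), j * m j
        = ∑ j ∈ Finset.Icc 1 (min u ℓ), j * m j := by
      symm
      apply Finset.sum_subset hsub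
      intro j hjB hjA
      rw [Finset.mem_Icc] at hjB
      rw [Finset.mem_Icc] at hjA
      have hj0 : m j = 0 := by
        by_contra h
        have h1 : 1 ≤ m j := by omega
        have hb := hjB.2
        have := hqmax j (by omega) (by omega) h1
        omega
      simp [hj0]
    have hsplit : ∑ j ∈ Finset.Icc 1 (min u ℓ), j * m j
        = ∑ j ∈ Finset.Icc 1 (min u ℓ), j * (if j = q then m q - 1 else m j) + q := by
      rw [← Finset.sum_erase_add _ (fun j => j * m j) hmem,
          ← Finset.sum_erase_add _ (fun j => j * (if j = q then m q - 1 else m j)) hmem]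
      have h1 : ∑ j ∈ (Finset.Icc 1 (min u ℓ)).erase q,
          j * (if j = q then m q - 1 else m j)
          = ∑ j ∈ (Finset.Icc 1 (min u ℓ)).erase q, j * m j := by
        apply Finset.sum_congr rfl
        intro j hj
        have : j ≠ q := Finset.ne_of_mem_erase hj
        simp [this]
      rw [h1]
      have hite : (if q = q then m q - 1 else m q) = m q - 1 := if_pos rfl
      rw [hite]
      have hmul : q * m q = q * (m q - 1) + q := by
        rcases Nat.exists_eq_add_of_le hmq with ⟨e, he⟩
        rw [he]
        have h2 : 1 + e - 1 = e := by omega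
        rw [h2]; ring
      omega
    omega

/-- The prefix-sum condition implies universality. -/
lemma key_universal : ∀ s : ℕ, ∀ ℓ : ℕ, ∀ m : ℕ → ℕ, 1 ≤ s →
    (∀ u, 1 ≤ u → u ≤ s → u ≤ ∑ j ∈ Finset.Icc 1 (min u ℓ), j * m j) →
    HasSubpartition ℓ m s := by
  intro s
  induction s using Nat.strong_induction_on with
  | _ s ih =>
    intro ℓ m hs hsum
    have h1 := hsum 1 le_rfl hs
    have hl1 : 1 ≤ ℓ := by
      by_contra h
      have hl0 : ℓ = 0 := by omega
      simp [hl0] at h1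
    have hmin1 : min 1 ℓ = 1 := by omega
    rw [hmin1] at h1
    simp at h1
    -- h1 : 1 ≤ m 1
    have hne : ((Finset.Icc 1 (min s ℓ)).filter (fun j => 1 ≤ m j)).Nonempty := by
      refine ⟨1, Finset.mem_filter.mpr ⟨Finset.mem_Icc.mpr ⟨le_rfl, ?_⟩, h1⟩⟩
      exact le_min hs hl1
    set q := ((Finset.Icc 1 (min s ℓ)).filter (fun j => 1 ≤ m j)).max' hne with hqdef
    have hqT : q ∈ (Finset.Icc 1 (min s ℓ)).filter (fun j => 1 ≤ m j) :=
      Finset.max'_mem _ hne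
    rw [Finset.mem_filter, Finset.mem_Icc] at hqT
    obtain ⟨⟨hq1, hq2⟩, hmq⟩ := hqT
    have hqmax : ∀ q', 1 ≤ q' → q' ≤ min s ℓ → 1 ≤ m q' → q' ≤ q := by
      intro q' a b c
      apply Finset.le_max'
      rw [Finset.mem_filter, Finset.mem_Icc]
      exact ⟨⟨a, b⟩, c⟩
    have hqs : q ≤ s := le_trans hq2 (min_le_left _ _)
    have hql : q ≤ ℓ := le_trans hq2 (min_le_right _ _)
    by_cases hqeq : q = s
    · refine ⟨fun j => if j = q then 1 else 0, ?_, ?_⟩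
      · intro j
        by_cases h : j = q
        · simp only [h, if_pos rfl]
          exact hmq
        · simp [h]
      · have : ∑ j ∈ Finset.Icc 1 ℓ, j * (if j = q then 1 else 0)
            = ∑ j ∈ Finset.Icc 1 ℓ, (if j = q then j else 0) := by
          apply Finset.sum_congr rfl
          intro j _
          split <;> simp
        rw [this]
        rw [Finset.sum_eq_single_of_mem q (Finset.mem_Icc.mpr ⟨hq1, hql⟩)
          (fun b _ hb => if_neg hb)]
        rw [if_pos rfl]
        exact hqeq
    · have hlt : q < s := lt_of_le_of_ne hqs hqeq
      have ht := transfer_hsum ℓ s m hsum q hq1 hq2 hmq hqmax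
      obtain ⟨c', hc'1, hc'2⟩ := ih (s - q) (by omega) ℓ
        (fun j => if j = q then m q - 1 else m j) (by omega) ht
      refine ⟨fun j => if j = q then c' q + 1 else c' j, ?_, ?_⟩
      · intro j
        by_cases h : j = q
        · have h' := hc'1 q
          simp only [eq_self_iff_true, ite_true] at h'
          simp only [h, eq_self_iff_true, ite_true]
          omega
        · have h' := hc'1 j
          simp only [if_neg h] at h'
          simpa [h] using h'
      · have hqmem : q ∈ Finset.Icc 1 ℓ := Finset.mem_Icc.mpr ⟨hq1, hql⟩
        rw [← Finset.sum_erase_add _ (fun j => j * c' j) hqmem] at hc'2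
        rw [← Finset.sum_erase_add _
          (fun j => j * (if j = q then c' q + 1 else c' j)) hqmem]
        have h1 : ∑ j ∈ (Finset.Icc 1 ℓ).erase q,
            j * (if j = q then c' q + 1 else c' j)
            = ∑ j ∈ (Finset.Icc 1 ℓ).erase q, j * c' j := by
          apply Finset.sum_congr rfl
          intro j hj
          have : j ≠ q := Finset.ne_of_mem_erase hj
          simp [this]
        rw [h1]
        have hite : (if q = q then c' q + 1 else c' q) = c' q + 1 := if_pos rfl
        rw [hite]
        have hmul : q * (c' q + 1) = q * c' q + q := by ring
        omega
    
/-- If `∑_{j=1}^{min(u,ℓ)} j·m_j ≥ u` for every `u ∈ {1,…,s}` and `q` is the largest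
index with `q ≤ min(s,ℓ)` and `m q ≥ 1`, then the partition obtained by removing one
part of size `q` is `(s - q)`-universal. -/
theorem stepDown_isUniversal (ℓ s : ℕ) (m : ℕ → ℕ) (hs : 1 ≤ s)
    (hsum : ∀ u, 1 ≤ u → u ≤ s → u ≤ ∑ j ∈ Finset.Icc 1 (min u ℓ), j * m j)
    (q : ℕ) (hq1 : 1 ≤ q) (hq2 : q ≤ min s ℓ) (hmq : 1 ≤ m q)
    (hqmax : ∀ q', 1 ≤ q' → q' ≤ min s ℓ → 1 ≤ m q' → q' ≤ q) :
    IsUniversal ℓ (fun j => if j = q then m q - 1 else m j) (s - q) := by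
  intro s' hs'1 hs'2
  have ht := transfer_hsum ℓ s m hsum q hq1 hq2 hmq hqmax
  exact key_universal s' ℓ _ hs'1 (fun u hu1 hu2 => ht u hu1 (le_trans hu2 hs'2))
end

section
/- Fix k ≥ 1. For a vector r = (m_1,…,m_k) ∈ ℕ^k with m_j ≤ ⌊k/j⌋ for all j, define x_j(r) = e^{-1/j}/(j^{m_j}·m_j!) if m_j < ⌊k/j⌋, and x_j(r) = 1 − e^{-1/j}·∑_{0 ≤ i < ⌊k/j⌋} 1/(j^i·i!) if m_j = ⌊k/j⌋. Then p(∞,k) = ∑_r ∏_{j=1}^{k} x_j(r), where the (finite) sum is over all k-free vectors r = (m_1,…,m_k) with m_j ≤ ⌊k/j⌋ for every j. -/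
open scoped ENNReal

namespace PInfAux

lemma tsum_pi_fin : ∀ (n : ℕ) (β : Fin n → Type) (G : ∀ j, β j → ℝ≥0∞),
    ∑' m : ∀ j, β j, ∏ j, G j (m j) = ∏ j, ∑' b, G j b := by
  intro n
  induction n with
  | zero =>
    intro β G
    simp [tsum_eq_single (default : ∀ j : Fin 0, β j)
      (fun b hb => absurd (Subsingleton.elim b default) hb)]
  | succ n ih =>
    intro β G
    rw [← (Fin.consEquiv β).tsum_eq, ENNReal.tsum_prod']
    have h1 : ∀ (a : β 0) (b : ∀ j : Fin n, β j.succ),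
        ∏ j, G j ((Fin.consEquiv β) (a, b) j) = G 0 a * ∏ j : Fin n, G j.succ (b j) := by
      intro a b
      rw [Fin.prod_univ_succ]
      rfl
    simp_rw [h1, ENNReal.tsum_mul_left, ENNReal.tsum_mul_right, ih, Fin.prod_univ_succ]

/-- the Poisson term -/
noncomputable def pTerm (x : ℝ) (n : ℕ) : ℝ := Real.exp (-x) * x ^ n / n.factorial

lemma pTerm_nonneg {x : ℝ} (hx : 0 ≤ x) (n : ℕ) : 0 ≤ pTerm x n := by
  unfold pTerm
  positivity

lemma summable_pTerm (x : ℝ) : Summable (pTerm x) := by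
  unfold pTerm
  simp_rw [mul_div_assoc]
  exact (Real.summable_pow_div_factorial x).mul_left _

lemma tsum_pTerm (x : ℝ) : ∑' n, pTerm x n = 1 := by
  unfold pTerm
  simp_rw [mul_div_assoc]
  rw [tsum_mul_left]
  have : ∑' n : ℕ, x ^ n / n.factorial = Real.exp x := by
    rw [Real.exp_eq_exp_ℝ, NormedSpace.exp_eq_tsum_div]
  rw [this, ← Real.exp_add]
  simp

noncomputable def E (x : ℝ) (n : ℕ) : ℝ≥0∞ := ENNReal.ofReal (pTerm x n)

lemma tsum_E {x : ℝ} (hx : 0 ≤ x) : ∑' n, E x n = 1 := by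
  unfold E
  rw [← ENNReal.ofReal_tsum_of_nonneg (pTerm_nonneg hx) (summable_pTerm x), tsum_pTerm]
  simp

lemma head_le_one {x : ℝ} (hx : 0 ≤ x) (c : ℕ) :
    ∑ i ∈ Finset.range c, pTerm x i ≤ 1 := by
  rw [← tsum_pTerm x]
  exact Summable.sum_le_tsum _ (fun i _ => pTerm_nonneg hx i) (summable_pTerm x)

lemma tsum_E_tail {x : ℝ} (hx : 0 ≤ x) (c : ℕ) :
    ∑' n : {n : ℕ // c ≤ n}, E x n.1
      = ENNReal.ofReal (1 - ∑ i ∈ Finset.range c, pTerm x i) := by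
  let e : ℕ ≃ {n : ℕ // c ≤ n} :=
    { toFun := fun i => ⟨i + c, Nat.le_add_left c i⟩
      invFun := fun n => n.1 - c
      left_inv := fun i => by simp
      right_inv := fun n => by
        ext
        exact Nat.sub_add_cancel n.2 }
  rw [← e.tsum_eq]
  have hsum : Summable (fun i => pTerm x (i + c)) :=
    (summable_nat_add_iff c).mpr (summable_pTerm x)
  have htail : ∑' i, pTerm x (i + c) = 1 - ∑ i ∈ Finset.range c, pTerm x i := by
    have := (summable_pTerm x).sum_add_tsum_nat_add c
    rw [tsum_pTerm] at this
    linarith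
  calc ∑' i : ℕ, E x ((e i : {n : ℕ // c ≤ n}) : ℕ)
      = ∑' i : ℕ, ENNReal.ofReal (pTerm x (i + c)) := rfl
    _ = ENNReal.ofReal (∑' i, pTerm x (i + c)) :=
        (ENNReal.ofReal_tsum_of_nonneg (fun i => pTerm_nonneg hx _) hsum).symm
    _ = ENNReal.ofReal (1 - ∑ i ∈ Finset.range c, pTerm x i) := by rw [htail]

end PInfAux

/-- The partition with `m j` parts of size `(j:ℕ)+1` for `j : Fin k` has a subpartition of
size `s`. -/
def HasSubpartitionFin (k : ℕ) (m : Fin k → ℕ) (s : ℕ) : Prop :=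
  ∃ c : Fin k → ℕ, (∀ j, c j ≤ m j) ∧ ∑ j : Fin k, ((j : ℕ) + 1) * c j = s

/-- `pInf k = p(∞,k)`: the convergent sum of `∏_{j=1}^{k} e^{-1/j}·(1/j)^{m_j}/m_j!` over all
`k`-free multiplicity vectors `(m_1,…,m_k) ∈ ℕ^k`. -/
noncomputable def pInf (k : ℕ) : ℝ :=
  ∑' m : {m : Fin k → ℕ // ¬ HasSubpartitionFin k m k},
    ∏ j : Fin k, Real.exp (-(1 / ((j : ℕ) + 1 : ℝ))) * (1 / ((j : ℕ) + 1 : ℝ)) ^ (m.1 j) /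
      (Nat.factorial (m.1 j) : ℝ)

/-- The factor `x_j(r)`: for a vector `r` with `r_j ≤ ⌊k/j⌋`, this is
`e^{-1/j}/(j^{r_j}·r_j!)` if `r_j < ⌊k/j⌋`, and
`1 - e^{-1/j}·∑_{0 ≤ i < ⌊k/j⌋} 1/(j^i·i!)` if `r_j = ⌊k/j⌋`. -/
noncomputable def xFactor (k : ℕ) (r : Fin k → ℕ) (j : Fin k) : ℝ :=
  if r j < k / ((j : ℕ) + 1) then
    Real.exp (-(1 / ((j : ℕ) + 1 : ℝ))) /
      ((((j : ℕ) + 1 : ℝ)) ^ (r j) * (Nat.factorial (r j) : ℝ))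
  else
    1 - Real.exp (-(1 / ((j : ℕ) + 1 : ℝ))) *
      ∑ i ∈ Finset.range (k / ((j : ℕ) + 1)),
        (1 : ℝ) / ((((j : ℕ) + 1 : ℝ)) ^ i * (Nat.factorial i : ℝ))

namespace PInfAux

variable (k : ℕ)

/-- the parameter `x_j = 1/(j+1)` -/
noncomputable def xj (j : Fin k) : ℝ := 1 / ((j : ℕ) + 1 : ℝ)

lemma xj_nonneg (j : Fin k) : 0 ≤ xj k j := by
  unfold xj; positivity

/-- cap -/
def cap (j : Fin k) : ℕ := k / ((j : ℕ) + 1)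

/-- head sum rewriting: `∑_{i<c} pTerm (xj j) i = exp(-xj j) * ∑ 1/((j+1)^i i!)` -/
lemma head_eq (j : Fin k) (c : ℕ) :
    ∑ i ∈ Finset.range c, pTerm (xj k j) i
      = Real.exp (-(1 / ((j : ℕ) + 1 : ℝ))) *
        ∑ i ∈ Finset.range c, (1 : ℝ) / ((((j : ℕ) + 1 : ℝ)) ^ i * (Nat.factorial i : ℝ)) := by
  rw [Finset.mul_sum]
  refine Finset.sum_congr rfl fun i _ => ?_
  unfold pTerm xj
  have hj : ((j : ℕ) + 1 : ℝ) ≠ 0 := by positivity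
  field_simp
  rw [← mul_pow, one_div_mul_cancel hj, one_pow]

lemma xFactor_nonneg (r : Fin k → ℕ) (j : Fin k) : 0 ≤ xFactor k r j := by
  unfold xFactor
  split
  · positivity
  · rw [← head_eq k j (k / ((j : ℕ) + 1)), sub_nonneg]
    exact head_le_one (xj_nonneg k j) _

/-- pTerm equals the pInf summand term -/
lemma pTerm_eq (j : Fin k) (n : ℕ) :
    pTerm (xj k j) n
      = Real.exp (-(1 / ((j : ℕ) + 1 : ℝ))) * (1 / ((j : ℕ) + 1 : ℝ)) ^ n /
        (Nat.factorial n : ℝ) := rfl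

/-- truncation -/
def trunc (m : Fin k → ℕ) : Fin k → ℕ := fun j => min (m j) (cap k j)

lemma has_iff_trunc (m : Fin k → ℕ) :
    HasSubpartitionFin k m k ↔ HasSubpartitionFin k (trunc k m) k := by
  constructor
  · rintro ⟨c, hc, hs⟩
    refine ⟨c, fun j => le_min (hc j) ?_, hs⟩
    have h1 : ((j : ℕ) + 1) * c j ≤ ∑ i : Fin k, ((i : ℕ) + 1) * c i :=
      Finset.single_le_sum (f := fun i : Fin k => ((i : ℕ) + 1) * c i)
        (fun i _ => Nat.zero_le _) (Finset.mem_univ j)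
    exact Nat.le_div_iff_mul_le (Nat.succ_pos _) |>.mpr
      (by rw [mul_comm]; exact h1.trans hs.le)
  · rintro ⟨c, hc, hs⟩
    exact ⟨c, fun j => (hc j).trans (min_le_left _ _), hs⟩

end PInfAux

open PInfAux

open scoped Classical in
/-- `p(∞,k)` is the finite sum of `∏_{j=1}^{k} x_j(r)` over all `k`-free vectors
`r = (m_1,…,m_k)` with `m_j ≤ ⌊k/j⌋` for every `j`. -/
theorem pInf_eq_finite_sum (k : ℕ) (hk : 1 ≤ k) :
    pInf k =
      ∑ r ∈ (Fintype.piFinset fun j : Fin k => Finset.range (k / ((j : ℕ) + 1) + 1)).filter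
          (fun r => ¬ HasSubpartitionFin k r k),
        ∏ j : Fin k, xFactor k r j := by
  set S := (Fintype.piFinset fun j : Fin k => Finset.range (k / ((j : ℕ) + 1) + 1)).filter
      (fun r => ¬ HasSubpartitionFin k r k) with hS
  -- the ENNReal-valued product
  set g : (Fin k → ℕ) → ℝ≥0∞ := fun m => ∏ j, E (xj k j) (m j) with hg
  set P : ℝ≥0∞ := ∑' m : {m : Fin k → ℕ // ¬ HasSubpartitionFin k m k}, g m.1 with hP
  -- Step 1: pInf k = P.toReal
  have step1 : pInf k = P.toReal := by
    rw [hP, ENNReal.tsum_toReal_eq (fun m => by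
      rw [hg]
      exact ENNReal.prod_ne_top (fun j _ => ENNReal.ofReal_ne_top))]
    unfold pInf
    congr 1
    funext m
    rw [hg, ENNReal.toReal_prod]
    refine Finset.prod_congr rfl fun j _ => ?_
    rw [E, ENNReal.toReal_ofReal (pTerm_nonneg (xj_nonneg k j) _), pTerm_eq]
  -- Step 2: P equals the finite sum (in ENNReal)
  have step2 : P = ∑ r ∈ S, ∏ j, ENNReal.ofReal (xFactor k r j) := by
    rw [hP,
      show (∑' m : {m : Fin k → ℕ // ¬ HasSubpartitionFin k m k}, g m.1)
        = ∑' m : ({m : Fin k → ℕ | ¬ HasSubpartitionFin k m k} : Set (Fin k → ℕ)), g m.1 from rfl,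
      tsum_subtype]
    rw [← ENNReal.tsum_fiberwise (Set.indicator {m | ¬ HasSubpartitionFin k m k} g) (trunc k)]
    have key : ∀ r : Fin k → ℕ,
        (∑' m : (trunc k ⁻¹' {r} : Set (Fin k → ℕ)),
            Set.indicator {m | ¬ HasSubpartitionFin k m k} g m.1)
          = if r ∈ S then ∏ j, ENNReal.ofReal (xFactor k r j) else 0 := by
      intro r
      by_cases hrS : r ∈ S
      · simp only [hrS, if_true]
        have hrcap : ∀ j, r j ≤ cap k j := by
          intro j
          have := Finset.mem_filter.mp hrS |>.1
          rw [Fintype.mem_piFinset] at this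
          have := this j
          rw [Finset.mem_range] at this
          exact Nat.lt_succ_iff.mp this
        have hrfree : ¬ HasSubpartitionFin k r k := (Finset.mem_filter.mp hrS).2
        -- every member of the fiber is k-free
        have hmem : ∀ m : (trunc k ⁻¹' {r} : Set (Fin k → ℕ)),
            Set.indicator {m | ¬ HasSubpartitionFin k m k} g m.1 = g m.1 := by
          rintro ⟨m, hm⟩
          have hm' : trunc k m = r := hm
          refine Set.indicator_of_mem ?_ g
          intro hhas
          exact hrfree (hm' ▸ (has_iff_trunc k m).mp hhas)
        rw [tsum_congr hmem]
        -- reindex the fiber as a pi type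
        let e1 : (trunc k ⁻¹' {r} : Set (Fin k → ℕ)) ≃
            ∀ j : Fin k, {n : ℕ // min n (cap k j) = r j} := by
          refine (Equiv.subtypeEquivRight ?_).trans
            (Equiv.subtypePiEquivPi (p := fun j (n : ℕ) => min n (cap k j) = r j))
          intro m
          simp only [Set.mem_preimage, Set.mem_singleton_iff, funext_iff]
          rfl
        rw [← e1.symm.tsum_eq]
        have e1val : ∀ q : ∀ j : Fin k, {n : ℕ // min n (cap k j) = r j},
            g (e1.symm q) = ∏ j, E (xj k j) (q j).1 := by
          intro q
          rw [hg]
          exact Finset.prod_congr rfl fun j _ => rfl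
        rw [tsum_congr e1val]
        rw [tsum_pi_fin k (fun j => {n : ℕ // min n (cap k j) = r j})
          (fun j b => E (xj k j) b.1)]
        refine Finset.prod_congr rfl fun j _ => ?_
        -- per-coordinate computation
        rcases lt_or_eq_of_le (hrcap j) with hlt | heq
        · -- r j < cap: singleton
          have huniq : ∀ b : {n : ℕ // min n (cap k j) = r j}, b = ⟨r j, by omega⟩ := by
            rintro ⟨n, hn⟩
            have : n = r j := by omega
            subst this
            rfl
          rw [tsum_eq_single (⟨r j, by omega⟩ : {n : ℕ // min n (cap k j) = r j})
            (fun b hb => absurd (huniq b) hb)]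
          unfold xFactor
          rw [if_pos (show r j < k / ((j : ℕ) + 1) from hlt)]
          unfold E pTerm xj
          congr 1
          have hj : ((j : ℕ) + 1 : ℝ) ≠ 0 := by positivity
          field_simp
          rw [← mul_pow, one_div_mul_cancel hj, one_pow]
        · -- r j = cap: tail
          let e2 : {n : ℕ // min n (cap k j) = r j} ≃ {n : ℕ // cap k j ≤ n} :=
            Equiv.subtypeEquivRight (fun n => by omega)
          rw [← e2.symm.tsum_eq]
          have : ∀ b : {n : ℕ // cap k j ≤ n}, E (xj k j) ((e2.symm b) : ℕ) =
              E (xj k j) b.1 := fun b => rfl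
          rw [tsum_congr this, tsum_E_tail (xj_nonneg k j) (cap k j)]
          unfold xFactor
          rw [if_neg (show ¬ (r j < k / ((j : ℕ) + 1)) from by
            have : r j = k / ((j : ℕ) + 1) := heq
            omega)]
          rw [head_eq k j]
          rfl
      · simp only [hrS, if_false]
        by_cases hcap : ∀ j, r j ≤ cap k j
        · -- then r must have a subpartition
          have hhas : HasSubpartitionFin k r k := by
            by_contra h
            exact hrS (Finset.mem_filter.mpr ⟨by
              rw [Fintype.mem_piFinset]
              intro j
              rw [Finset.mem_range]
              have := hcap j
              unfold cap at this
              omega, h⟩)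
          refine Summable.tsum_eq_zero_iff ENNReal.summable |>.mpr ?_
          rintro ⟨m, hm⟩
          have hm' : trunc k m = r := hm
          refine Set.indicator_of_notMem ?_ g
          simp only [Set.mem_setOf_eq, not_not]
          exact (has_iff_trunc k m).mpr (hm' ▸ hhas)
        · -- fiber is empty
          push_neg at hcap
          obtain ⟨j, hj⟩ := hcap
          have : IsEmpty (trunc k ⁻¹' {r} : Set (Fin k → ℕ)) := by
            constructor
            rintro ⟨m, hm⟩
            have hm' : trunc k m = r := hm
            have h2 : min (m j) (cap k j) = r j := congrFun hm' j
            have h3 : cap k j < r j := hj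
            omega
          exact tsum_empty
    rw [tsum_congr key, tsum_eq_sum (fun r hr => by rw [if_neg hr])]
    exact Finset.sum_congr rfl fun r hr => by rw [if_pos hr]
  -- conclude
  rw [step1, step2, ENNReal.toReal_sum (fun r _ =>
    ENNReal.prod_ne_top (fun j _ => ENNReal.ofReal_ne_top))]
  refine Finset.sum_congr rfl fun r _ => ?_
  rw [ENNReal.toReal_prod]
  exact Finset.prod_congr rfl fun j _ =>
    ENNReal.toReal_ofReal (xFactor_nonneg k r j)
end

section
/- p(∞,4) = (3/2)·(1 − e^{-1/3})·e^{-7/4} + (11/3)·e^{-25/12}. -/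
/-- The summand of `pInf 4` as a function of the multiplicity vector. -/
noncomputable def wgt (m : Fin 4 → ℕ) : ℝ :=
  ∏ j : Fin 4, Real.exp (-(1 / ((j : ℕ) + 1 : ℝ))) * (1 / ((j : ℕ) + 1 : ℝ)) ^ (m j) /
      (Nat.factorial (m j) : ℝ)

lemma fin4_two : ((2 : Fin 4) : ℕ) = 2 := rfl
lemma fin4_three : ((3 : Fin 4) : ℕ) = 3 := rfl

lemma wgt_apply (a b c d : ℕ) :
    wgt ![a, b, c, d] =
      (Real.exp (-1) / a.factorial) *
        (Real.exp (-(1/2)) * (1/2:ℝ)^b / b.factorial) *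
        (Real.exp (-(1/3)) * (1/3:ℝ)^c / c.factorial) *
        (Real.exp (-(1/4)) * (1/4:ℝ)^d / d.factorial) := by
  simp [wgt, Fin.prod_univ_four, fin4_two, fin4_three]
  norm_num
  ring

lemma expsum (x : ℝ) : ∑' n : ℕ, x ^ n / (Nat.factorial n : ℝ) = Real.exp x := by
  rw [Real.exp_eq_exp_ℝ, NormedSpace.exp_eq_tsum_div]

lemma wgt_g (b : ℕ) (n : ℕ) :
    wgt ![0, b, n, 0] =
      (Real.exp (-1) * (Real.exp (-(1/2)) * (1/2:ℝ)^b / b.factorial) * Real.exp (-(1/3)) *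
        Real.exp (-(1/4))) * ((1/3:ℝ) ^ n / n.factorial) := by
  rw [wgt_apply]; norm_num; ring

lemma summable_g (b : ℕ) : Summable fun n : ℕ => wgt ![0, b, n, 0] :=
  ((NormedSpace.expSeries_div_summable (1/3 : ℝ)).mul_left _).congr
    fun n => (wgt_g b n).symm

lemma tsum_g (b : ℕ) :
    ∑' n : ℕ, wgt ![0, b, n, 0] =
      Real.exp (-(7/4)) * ((1/2:ℝ)^b / b.factorial) := by
  calc ∑' n : ℕ, wgt ![0, b, n, 0]
      = ∑' n : ℕ, (Real.exp (-1) * (Real.exp (-(1/2)) * (1/2:ℝ)^b / b.factorial) *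
          Real.exp (-(1/3)) * Real.exp (-(1/4))) * ((1/3:ℝ) ^ n / n.factorial) :=
        tsum_congr fun n => wgt_g b n
    _ = _ := by
        rw [tsum_mul_left, expsum]
        have h7 : Real.exp (-1) * Real.exp (-(1/2)) * Real.exp (-(1/3)) *
            Real.exp (-(1/4)) * Real.exp (1/3) = Real.exp (-(7/4)) := by
          rw [← Real.exp_add, ← Real.exp_add, ← Real.exp_add, ← Real.exp_add]
          norm_num
        rw [← h7]; ring

lemma has_iff (m : Fin 4 → ℕ) :
    HasSubpartitionFin 4 m 4 ↔
      (1 ≤ m 3 ∨ 2 ≤ m 1 ∨ 4 ≤ m 0 ∨ (2 ≤ m 0 ∧ 1 ≤ m 1) ∨ (1 ≤ m 0 ∧ 1 ≤ m 2)) := by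
  constructor
  · rintro ⟨c, hc, hs⟩
    have h0 := hc 0; have h1 := hc 1; have h2 := hc 2; have h3 := hc 3
    rw [Fin.sum_univ_four] at hs
    norm_num [fin4_three] at hs
    omega
  · intro h
    rcases h with h | h | h | ⟨h, h'⟩ | ⟨h, h'⟩
    · exact ⟨![0,0,0,1], by intro j; fin_cases j <;> simp <;> omega, by decide⟩
    · exact ⟨![0,2,0,0], by intro j; fin_cases j <;> simp <;> omega, by decide⟩
    · exact ⟨![4,0,0,0], by intro j; fin_cases j <;> simp <;> omega, by decide⟩
    · exact ⟨![2,1,0,0], by intro j; fin_cases j <;> simp <;> omega, by decide⟩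
    · exact ⟨![1,0,1,0], by intro j; fin_cases j <;> simp <;> omega, by decide⟩

lemma S_eq : {m : Fin 4 → ℕ | ¬ HasSubpartitionFin 4 m 4} =
    (Set.range fun n : ℕ => ![0,0,n,0]) ∪ (Set.range fun n : ℕ => ![0,1,n,0]) ∪
      {![1,0,0,0]} ∪ {![1,1,0,0]} ∪ {![2,0,0,0]} ∪ {![3,0,0,0]} := by
  ext m
  simp only [Set.mem_setOf_eq, has_iff, Set.mem_union, Set.mem_range, Set.mem_singleton_iff]
  constructor
  · intro h
    by_cases h0 : m 0 = 0
    · by_cases h1 : m 1 = 0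
      · exact Or.inl <| Or.inl <| Or.inl <| Or.inl <| Or.inl
          ⟨m 2, by funext j; fin_cases j <;> simp <;> omega⟩
      · exact Or.inl <| Or.inl <| Or.inl <| Or.inl <| Or.inr
          ⟨m 2, by funext j; fin_cases j <;> simp <;> omega⟩
    · by_cases h1 : m 1 = 0
      · by_cases h0' : m 0 = 1
        · exact Or.inl <| Or.inl <| Or.inl <| Or.inr (by funext j; fin_cases j <;> simp <;> omega)
        · by_cases h0'' : m 0 = 2
          · exact Or.inl <| Or.inr (by funext j; fin_cases j <;> simp <;> omega)
          · exact Or.inr (by funext j; fin_cases j <;> simp <;> omega)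
      · exact Or.inl <| Or.inl <| Or.inr (by funext j; fin_cases j <;> simp <;> omega)
  · rintro (((((⟨n, rfl⟩ | ⟨n, rfl⟩) | rfl) | rfl) | rfl) | rfl) <;> simp

lemma inj_g (b : ℕ) : Function.Injective fun n : ℕ => ![0, b, n, 0] := by
  intro x y h
  simpa using congrFun h 2

lemma summable_range_g (b : ℕ) :
    Summable (wgt ∘ (↑) : ↥(Set.range fun n : ℕ => ![0, b, n, 0]) → ℝ) :=
  (Equiv.ofInjective _ (inj_g b)).summable_iff.mp (summable_g b)

lemma summable_single (p : Fin 4 → ℕ) :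
    Summable (wgt ∘ (↑) : ↥({p} : Set (Fin 4 → ℕ)) → ℝ) :=
  Summable.of_finite

lemma d12 : Disjoint (Set.range fun n : ℕ => ![0, 0, n, 0])
    (Set.range fun n : ℕ => ![0, 1, n, 0]) := by
  rw [Set.disjoint_left]
  rintro m ⟨n, rfl⟩ ⟨n', h⟩
  simpa using congrFun h 1

lemma drs (b : ℕ) (p : Fin 4 → ℕ) (hp : p 0 ≠ 0) :
    Disjoint (Set.range fun n : ℕ => ![0, b, n, 0]) ({p} : Set (Fin 4 → ℕ)) := by
  rw [Set.disjoint_singleton_right]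
  rintro ⟨n, h⟩
  exact hp (by simpa using (congrFun h 0).symm)

lemma dss (p q : Fin 4 → ℕ) (h : p ≠ q) :
    Disjoint ({p} : Set (Fin 4 → ℕ)) ({q} : Set (Fin 4 → ℕ)) := by
  simp [Set.disjoint_singleton, h]

/-- `p(∞,4) = (3/2)·(1 − e^{-1/3})·e^{-7/4} + (11/3)·e^{-25/12}`. -/
theorem pInf_four :
    pInf 4 = (3 / 2) * (1 - Real.exp (-(1 / 3))) * Real.exp (-(7 / 4)) +
      (11 / 3) * Real.exp (-(25 / 12)) := by
  have key : pInf 4 = ∑' m : ↥{m : Fin 4 → ℕ | ¬ HasSubpartitionFin 4 m 4}, wgt ↑m := rfl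
  -- abbreviations
  set A := Set.range fun n : ℕ => (![0,0,n,0] : Fin 4 → ℕ) with hA
  set B := Set.range fun n : ℕ => (![0,1,n,0] : Fin 4 → ℕ) with hB
  have dA1 : Disjoint A ({![1,0,0,0]} : Set (Fin 4 → ℕ)) := drs 0 _ (by decide)
  have dA2 : Disjoint A ({![1,1,0,0]} : Set (Fin 4 → ℕ)) := drs 0 _ (by decide)
  have dA3 : Disjoint A ({![2,0,0,0]} : Set (Fin 4 → ℕ)) := drs 0 _ (by decide)
  have dA4 : Disjoint A ({![3,0,0,0]} : Set (Fin 4 → ℕ)) := drs 0 _ (by decide)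
  have dB1 : Disjoint B ({![1,0,0,0]} : Set (Fin 4 → ℕ)) := drs 1 _ (by decide)
  have dB2 : Disjoint B ({![1,1,0,0]} : Set (Fin 4 → ℕ)) := drs 1 _ (by decide)
  have dB3 : Disjoint B ({![2,0,0,0]} : Set (Fin 4 → ℕ)) := drs 1 _ (by decide)
  have dB4 : Disjoint B ({![3,0,0,0]} : Set (Fin 4 → ℕ)) := drs 1 _ (by decide)
  have sA := summable_range_g 0
  have sB := summable_range_g 1
  have sU2 : Summable (wgt ∘ (↑) : ↥(A ∪ B) → ℝ) :=
    (sA.hasSum.add_disjoint d12 sB.hasSum).summable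
  have dU2 : Disjoint (A ∪ B) ({![1,0,0,0]} : Set (Fin 4 → ℕ)) :=
    Set.disjoint_union_left.mpr ⟨dA1, dB1⟩
  have sU3 : Summable (wgt ∘ (↑) : ↥(A ∪ B ∪ {![1,0,0,0]}) → ℝ) :=
    (sU2.hasSum.add_disjoint dU2 (summable_single _).hasSum).summable
  have dU3 : Disjoint (A ∪ B ∪ {![1,0,0,0]}) ({![1,1,0,0]} : Set (Fin 4 → ℕ)) :=
    Set.disjoint_union_left.mpr ⟨Set.disjoint_union_left.mpr ⟨dA2, dB2⟩, dss _ _ (by decide)⟩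
  have sU4 : Summable (wgt ∘ (↑) : ↥(A ∪ B ∪ {![1,0,0,0]} ∪ {![1,1,0,0]}) → ℝ) :=
    (sU3.hasSum.add_disjoint dU3 (summable_single _).hasSum).summable
  have dU4 : Disjoint (A ∪ B ∪ {![1,0,0,0]} ∪ {![1,1,0,0]})
      ({![2,0,0,0]} : Set (Fin 4 → ℕ)) :=
    Set.disjoint_union_left.mpr ⟨Set.disjoint_union_left.mpr
      ⟨Set.disjoint_union_left.mpr ⟨dA3, dB3⟩, dss _ _ (by decide)⟩, dss _ _ (by decide)⟩
  have sU5 : Summable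
      (wgt ∘ (↑) : ↥(A ∪ B ∪ {![1,0,0,0]} ∪ {![1,1,0,0]} ∪ {![2,0,0,0]}) → ℝ) :=
    (sU4.hasSum.add_disjoint dU4 (summable_single _).hasSum).summable
  have dU5 : Disjoint (A ∪ B ∪ {![1,0,0,0]} ∪ {![1,1,0,0]} ∪ {![2,0,0,0]})
      ({![3,0,0,0]} : Set (Fin 4 → ℕ)) :=
    Set.disjoint_union_left.mpr ⟨Set.disjoint_union_left.mpr ⟨Set.disjoint_union_left.mpr
      ⟨Set.disjoint_union_left.mpr ⟨dA4, dB4⟩, dss _ _ (by decide)⟩,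
        dss _ _ (by decide)⟩, dss _ _ (by decide)⟩
  rw [key, S_eq]
  rw [Summable.tsum_union_disjoint dU5 sU5 (summable_single _),
    Summable.tsum_union_disjoint dU4 sU4 (summable_single _),
    Summable.tsum_union_disjoint dU3 sU3 (summable_single _),
    Summable.tsum_union_disjoint dU2 sU2 (summable_single _),
    Summable.tsum_union_disjoint d12 sA sB,
    tsum_singleton, tsum_singleton, tsum_singleton, tsum_singleton]
  rw [tsum_range wgt (inj_g 0), tsum_range wgt (inj_g 1), tsum_g 0, tsum_g 1]
  rw [wgt_apply 1 0 0 0, wgt_apply 1 1 0 0, wgt_apply 2 0 0 0, wgt_apply 3 0 0 0]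
  have hE : Real.exp (-1) * Real.exp (-(1/2)) * Real.exp (-(1/3)) * Real.exp (-(1/4)) =
      Real.exp (-(25/12)) := by
    rw [← Real.exp_add, ← Real.exp_add, ← Real.exp_add]; norm_num
  have hE2 : Real.exp (-(1/3)) * Real.exp (-(7/4)) = Real.exp (-(25/12)) := by
    rw [← Real.exp_add]; norm_num
  simp only [Nat.factorial]
  push_cast
  nlinarith [hE, hE2, Real.exp_pos (-(25/12 : ℝ))]
end
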